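/- arXiv:0705.1177 — 2 statements merged into one kernel-verified Lean document; each statement's English description precedes it below -/
import Mathlib

section
/- Let H : [0,1] × M → ℝ be continuous with osc(H_t) ≠ 0 for all t. Let ξ(t) = (∫₀^t osc(H_s) ds) / (∫₀¹ osc(H_s) ds) and ζ = ξ⁻¹. Then ζ is a C¹ bijection of [0,1] fixing 0 and 1, and the reparameterized function H^ζ(t,x) = ζ'(t) H(ζ(t),x) satisfies osc((H^ζ)_t) = ∫₀¹ osc(H_s) ds for every t ∈ [0,1]; in particular ‖H^ζ‖_∞ = ‖H‖_{(1,∞)}. -/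
open Set Function MeasureTheory Filter Topology

/-- Let `H` be continuous with `osc(H_t) ≠ 0` for all `t ∈ [0,1]`. Let
`ξ(t) = (∫₀ᵗ osc(H_s) ds)/(∫₀¹ osc(H_s) ds)` and let `ζ` be its inverse on `[0,1]`.
Then `ζ` is a `C¹` bijection of `[0,1]` fixing `0` and `1`, and the reparameterized
function `H^ζ(t,x) = ζ'(t) H(ζ(t),x)` has `osc((H^ζ)_t) = ∫₀¹ osc(H_s) ds` for all
`t ∈ [0,1]`; in particular `‖H^ζ‖_∞ = ‖H‖_{(1,∞)}`. -/
theorem polterovich_reparam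
    {M : Type*} [MetricSpace M] [CompactSpace M] [Nonempty M]
    (H : ℝ → M → ℝ) (hH : Continuous (Function.uncurry H))
    (osc : ℝ → ℝ) (hosc : ∀ t, osc t = (⨆ x, H t x) - ⨅ x, H t x)
    (hne : ∀ t ∈ Set.Icc (0:ℝ) 1, osc t ≠ 0)
    (ξ : ℝ → ℝ)
    (hξ : ∀ t, ξ t = (∫ s in (0:ℝ)..t, osc s) / ∫ s in (0:ℝ)..1, osc s)
    (ζ : ℝ → ℝ) (hmaps : Set.MapsTo ζ (Set.Icc 0 1) (Set.Icc 0 1))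
    (hinv : ∀ t ∈ Set.Icc (0:ℝ) 1, ζ (ξ t) = t ∧ ξ (ζ t) = t) :
    ζ 0 = 0 ∧ ζ 1 = 1 ∧ ContDiffOn ℝ 1 ζ (Set.Icc 0 1) ∧
    (∀ t ∈ Set.Icc (0:ℝ) 1,
      (⨆ x, derivWithin ζ (Set.Icc (0:ℝ) 1) t * H (ζ t) x)
        - (⨅ x, derivWithin ζ (Set.Icc (0:ℝ) 1) t * H (ζ t) x)
        = ∫ s in (0:ℝ)..1, osc s) ∧
    (⨆ t : Set.Icc (0:ℝ) 1,
      ((⨆ x, derivWithin ζ (Set.Icc (0:ℝ) 1) t * H (ζ t) x)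
        - ⨅ x, derivWithin ζ (Set.Icc (0:ℝ) 1) t * H (ζ t) x))
      = ∫ s in (0:ℝ)..1, osc s := by
  set I : ℝ := ∫ s in (0:ℝ)..1, osc s with hIdef
  -- basic continuity facts
  have hHs : ∀ s : ℝ, Continuous (H s) := fun s =>
    hH.comp (Continuous.prodMk_right s)
  have hbddA : ∀ s : ℝ, BddAbove (Set.range (H s)) := fun s =>
    (isCompact_range (hHs s)).bddAbove
  have hbddB : ∀ s : ℝ, BddBelow (Set.range (H s)) := fun s =>
    (isCompact_range (hHs s)).bddBelow
  have hsup_cont : Continuous fun t => ⨆ x, H t x := by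
    have := IsCompact.continuous_sSup (f := H) (K := (Set.univ : Set M)) isCompact_univ hH
    simpa [Set.image_univ, iSup] using this
  have hinf_cont : Continuous fun t => ⨅ x, H t x := by
    have := IsCompact.continuous_sInf (f := H) (K := (Set.univ : Set M)) isCompact_univ hH
    simpa [Set.image_univ, iInf] using this
  have hosc_cont : Continuous osc := by
    have : Continuous fun t => (⨆ x, H t x) - ⨅ x, H t x := hsup_cont.sub hinf_cont
    exact this.congr fun t => (hosc t).symm
  have hosc_nonneg : ∀ t, 0 ≤ osc t := by
    intro t
    rw [hosc t, sub_nonneg]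
    obtain ⟨x⟩ := ‹Nonempty M›
    exact le_trans (ciInf_le (hbddB t) x) (le_ciSup (hbddA t) x)
  have hosc_pos : ∀ t ∈ Set.Icc (0:ℝ) 1, 0 < osc t := fun t ht =>
    lt_of_le_of_ne (hosc_nonneg t) (Ne.symm (hne t ht))
  have hIpos : 0 < I :=
    intervalIntegral.intervalIntegral_pos_of_pos_on (hosc_cont.intervalIntegrable 0 1)
      (fun x hx => hosc_pos x (Set.mem_Icc.2 ⟨hx.1.le, hx.2.le⟩)) one_pos
  -- derivative of ξ
  have hξd : ∀ t, HasDerivAt ξ (osc t / I) t := by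
    intro t
    have h1 : HasDerivAt (fun u => ∫ s in (0:ℝ)..u, osc s) (osc t) t :=
      (hosc_cont.integral_hasStrictDerivAt 0 t).hasDerivAt
    have h2 : HasDerivAt (fun u => (∫ s in (0:ℝ)..u, osc s) / I) (osc t / I) t :=
      h1.div_const I
    exact h2.congr_of_eventuallyEq (Filter.Eventually.of_forall fun u => (hξ u))
  have hξcont : Continuous ξ := by
    rw [continuous_iff_continuousAt]; exact fun t => (hξd t).continuousAt
  have hξ0 : ξ 0 = 0 := by simp [hξ 0]
  have hξ1 : ξ 1 = 1 := by rw [hξ 1, ← hIdef, div_self hIpos.ne']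
  have hξmono : StrictMonoOn ξ (Set.Icc 0 1) := by
    apply strictMonoOn_of_deriv_pos (convex_Icc 0 1) hξcont.continuousOn
    intro t ht
    rw [interior_Icc] at ht
    rw [(hξd t).deriv]
    exact div_pos (hosc_pos t (Set.mem_Icc.2 ⟨ht.1.le, ht.2.le⟩)) hIpos
  have hξmaps : Set.MapsTo ξ (Set.Icc 0 1) (Set.Icc 0 1) := by
    intro t ht
    constructor
    · rw [← hξ0]; exact hξmono.monotoneOn (Set.left_mem_Icc.2 zero_le_one) ht ht.1
    · rw [← hξ1]; exact hξmono.monotoneOn ht (Set.right_mem_Icc.2 zero_le_one) ht.2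
  have h01 : (0:ℝ) ∈ Set.Icc (0:ℝ) 1 := Set.left_mem_Icc.2 zero_le_one
  have h11 : (1:ℝ) ∈ Set.Icc (0:ℝ) 1 := Set.right_mem_Icc.2 zero_le_one
  have hζ0 : ζ 0 = 0 := by have := (hinv 0 h01).1; rwa [hξ0] at this
  have hζ1 : ζ 1 = 1 := by have := (hinv 1 h11).1; rwa [hξ1] at this
  -- injectivity of ζ on Icc
  have hζinj : Set.InjOn ζ (Set.Icc 0 1) := by
    intro a ha b hb hab
    rw [← (hinv a ha).2, ← (hinv b hb).2, hab]
  -- continuity of ζ on Icc via compactness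
  have hζcont : ContinuousOn ζ (Set.Icc (0:ℝ) 1) := by
    let e : Set.Icc (0:ℝ) 1 ≃ Set.Icc (0:ℝ) 1 :=
      { toFun := fun t => ⟨ξ t, hξmaps t.2⟩
        invFun := fun t => ⟨ζ t, hmaps t.2⟩
        left_inv := fun t => Subtype.ext ((hinv t t.2).1)
        right_inv := fun t => Subtype.ext ((hinv t t.2).2) }
    have hec : Continuous e := by
      exact Continuous.subtype_mk (hξcont.comp continuous_subtype_val) _
    have := (Continuous.homeoOfEquivCompactToT2 (f := e) hec).symm.continuous
    rw [continuousOn_iff_continuous_restrict]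
    have : Continuous fun t : Set.Icc (0:ℝ) 1 => ((Continuous.homeoOfEquivCompactToT2 (f := e) hec).symm t : ℝ) :=
      continuous_subtype_val.comp this
    exact this
  -- derivative of ζ within Icc
  have hζd : ∀ t ∈ Set.Icc (0:ℝ) 1, HasDerivWithinAt ζ (I / osc (ζ t)) (Set.Icc 0 1) t := by
    intro t ht
    have hζt : ζ t ∈ Set.Icc (0:ℝ) 1 := hmaps ht
    have hd : HasDerivAt ξ (osc (ζ t) / I) (ζ t) := hξd (ζ t)
    have hdne : osc (ζ t) / I ≠ 0 := div_ne_zero (hne _ hζt) hIpos.ne'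
    rw [hasDerivWithinAt_iff_tendsto_slope]
    have h1 : Tendsto (slope ξ (ζ t)) (𝓝[≠] (ζ t)) (𝓝 (osc (ζ t) / I)) :=
      hasDerivAt_iff_tendsto_slope.1 hd
    have h2 : Tendsto ζ (𝓝[Set.Icc (0:ℝ) 1 \ {t}] t) (𝓝[≠] (ζ t)) := by
      rw [tendsto_nhdsWithin_iff]
      constructor
      · exact ((hζcont t ht).mono Set.diff_subset)
      · filter_upwards [self_mem_nhdsWithin] with y hy
        exact fun h => hy.2 (hζinj hy.1 ht h)
    have h3 : Tendsto (fun y => (slope ξ (ζ t) (ζ y))⁻¹)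
        (𝓝[Set.Icc (0:ℝ) 1 \ {t}] t) (𝓝 ((osc (ζ t) / I)⁻¹)) :=
      (h1.comp h2).inv₀ hdne
    rw [show (osc (ζ t) / I)⁻¹ = I / osc (ζ t) from inv_div _ _] at h3
    refine h3.congr' ?_
    filter_upwards [self_mem_nhdsWithin] with y hy
    rw [slope_def_field, slope_def_field, (hinv y hy.1).2, (hinv t ht).2, inv_div]
  have udiff : UniqueDiffOn ℝ (Set.Icc (0:ℝ) 1) := uniqueDiffOn_Icc zero_lt_one
  have hdW : ∀ t ∈ Set.Icc (0:ℝ) 1, derivWithin ζ (Set.Icc (0:ℝ) 1) t = I / osc (ζ t) :=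
    fun t ht => (hζd t ht).derivWithin (udiff t ht)
  have hdiff : DifferentiableOn ℝ ζ (Set.Icc (0:ℝ) 1) :=
    fun t ht => (hζd t ht).differentiableWithinAt
  have hderiv_cont : ContinuousOn (derivWithin ζ (Set.Icc (0:ℝ) 1)) (Set.Icc (0:ℝ) 1) := by
    have : ContinuousOn (fun t => I / osc (ζ t)) (Set.Icc (0:ℝ) 1) :=
      continuousOn_const.div (hosc_cont.comp_continuousOn hζcont)
        (fun t ht => hne _ (hmaps ht))
    exact this.congr hdW
  have hCD : ContDiffOn ℝ 1 ζ (Set.Icc 0 1) := by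
    rw [show (1 : WithTop ℕ∞) = 0 + 1 by norm_num, contDiffOn_succ_iff_derivWithin udiff]
    exact ⟨hdiff, by simp, contDiffOn_zero.2 hderiv_cont⟩
  -- oscillation computation
  have hoscI : ∀ t ∈ Set.Icc (0:ℝ) 1,
      (⨆ x, derivWithin ζ (Set.Icc (0:ℝ) 1) t * H (ζ t) x)
        - (⨅ x, derivWithin ζ (Set.Icc (0:ℝ) 1) t * H (ζ t) x) = I := by
    intro t ht
    have hζt : ζ t ∈ Set.Icc (0:ℝ) 1 := hmaps ht
    have hc : (0:ℝ) ≤ I / osc (ζ t) := div_nonneg hIpos.le (hosc_nonneg _)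
    rw [hdW t ht, ← Real.mul_iSup_of_nonneg hc, ← Real.mul_iInf_of_nonneg hc,
      ← mul_sub, ← hosc (ζ t), div_mul_cancel₀ _ (hne _ hζt)]
  refine ⟨hζ0, hζ1, hCD, hoscI, ?_⟩
  haveI : Nonempty (Set.Icc (0:ℝ) 1) := ⟨⟨0, h01⟩⟩
  calc (⨆ t : Set.Icc (0:ℝ) 1,
      ((⨆ x, derivWithin ζ (Set.Icc (0:ℝ) 1) t * H (ζ t) x)
        - ⨅ x, derivWithin ζ (Set.Icc (0:ℝ) 1) t * H (ζ t) x))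
      = ⨆ _ : Set.Icc (0:ℝ) 1, I := by
        exact iSup_congr fun t => hoscI t t.2
    _ = I := ciSup_const
end

section
/- Let H : [0,1] × M → ℝ be Lipschitz in t uniformly in x with constant L (‖H_t − H_s‖_{C⁰} ≤ L|t−s|), normalized, and let ζ : [0,1] → [0,1] be C¹ with ‖ζ − id‖_{C⁰} < ε and 0 ≤ ζ' ≤ 2. Then the reparameterization H^ζ(t,x) = ζ'(t)H(ζ(t),x) satisfies, for every t, max_x (H^ζ(t,x) − H(t,x)) ≤ 2Lε + osc(H_t), and hence ‖H^ζ − H‖_∞ ≤ 4Lε + 2‖H‖_∞. -/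
open Set Function MeasureTheory Filter Topology

/-! Write `H^ζ_t - H_t = ζ'(t) (H_{ζ(t)} - H_t) + (ζ'(t) - 1) H_t`. The first term is at most
`2Lε` since `0 ≤ ζ' ≤ 2` and `|ζ(t) - t| < ε`; the second is at most `|H_t| ≤ osc(H_t)` since
`|ζ' - 1| ≤ 1` and a function of mean zero takes both signs, so that `inf H_t ≤ 0 ≤ sup H_t`.
Since this pointwise bound is two-sided, it also bounds `osc(H^ζ_t - H_t)` by twice itself. -/

noncomputable def osc {ι : Type*} (f : ι → ℝ) : ℝ := (⨆ i, f i) - ⨅ i, f i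

lemma osc_le_two_mul_of_abs_le {ι : Type*} [Nonempty ι] {f : ι → ℝ} {B : ℝ}
    (h : ∀ i, |f i| ≤ B) : osc f ≤ 2 * B := by
  have hsup : (⨆ i, f i) ≤ B := ciSup_le fun i => (le_abs_self _).trans (h i)
  have hinf : -B ≤ ⨅ i, f i := le_ciInf fun i => neg_le_of_abs_le (h i)
  unfold osc
  linarith

lemma abs_le_osc {ι : Type*} {f : ι → ℝ} (hA : BddAbove (range f)) (hB : BddBelow (range f))
    (hneg : ∃ i, f i ≤ 0) (hpos : ∃ i, 0 ≤ f i) (i : ι) : |f i| ≤ osc f := by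
  obtain ⟨j, hj⟩ := hneg
  obtain ⟨k, hk⟩ := hpos
  unfold osc
  refine abs_le.mpr ⟨?_, ?_⟩
  · linarith [le_ciSup hA k, ciInf_le hB i]
  · linarith [le_ciSup hA i, ciInf_le hB j]

lemma abs_le_osc_of_integral_eq_zero {X : Type*} [TopologicalSpace X] [CompactSpace X]
    [MeasurableSpace X] [OpensMeasurableSpace X] {μ : Measure X} [IsFiniteMeasure μ]
    (hμ : μ ≠ 0) {f : X → ℝ} (hf : Continuous f) (h0 : ∫ x, f x ∂μ = 0) (x : X) :
    |f x| ≤ osc f := by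
  have hint : Integrable f μ :=
    hf.integrable_of_hasCompactSupport (HasCompactSupport.of_compactSpace f)
  have hav : ⨍ x, f x ∂μ = 0 := by rw [average_eq, h0, smul_zero]
  refine abs_le_osc (isCompact_range hf).bddAbove (isCompact_range hf).bddBelow ?_ ?_ x
  · simpa only [hav] using exists_le_average hμ hint
  · simpa only [hav] using exists_average_le hμ hint

lemma bddAbove_range_osc {X Y : Type*} [TopologicalSpace X] [TopologicalSpace Y]
    [CompactSpace Y] [Nonempty Y] {F : X → Y → ℝ} (hF : Continuous (uncurry F))
    {s : Set X} (hs : IsCompact s) : BddAbove (range fun t : s => osc (F t)) := by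
  obtain ⟨C, hC⟩ := (hs.prod isCompact_univ).exists_bound_of_continuousOn hF.continuousOn
  refine ⟨2 * C, ?_⟩
  rintro _ ⟨t, rfl⟩
  exact osc_le_two_mul_of_abs_le fun y => hC (t, y) ⟨t.2, mem_univ y⟩

lemma abs_mul_sub_le {a : ℝ} (ha : a ∈ Icc (0 : ℝ) 2) (u v : ℝ) :
    |a * u - v| ≤ 2 * |u - v| + |v| := by
  have h1 : |a - 1| ≤ 1 := abs_le.mpr ⟨by linarith [ha.1], by linarith [ha.2]⟩
  calc |a * u - v| = |a * (u - v) + (a - 1) * v| := by ring_nf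
    _ ≤ |a| * |u - v| + |a - 1| * |v| := by
        rw [← abs_mul, ← abs_mul]; exact abs_add_le _ _
    _ ≤ 2 * |u - v| + 1 * |v| := by
        rw [abs_of_nonneg ha.1]; gcongr; exact ha.2
    _ = 2 * |u - v| + |v| := by rw [one_mul]

theorem reparam_linfty_estimate_general
    {M : Type*} [MetricSpace M] [CompactSpace M] [Nonempty M]
    [MeasurableSpace M] [BorelSpace M]
    (μ : Measure M) [IsFiniteMeasure μ] (hμ : μ ≠ 0)
    (H : ℝ → M → ℝ) (hH : Continuous (Function.uncurry H))
    (L : ℝ)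
    (hLip : ∀ t ∈ Set.Icc (0:ℝ) 1, ∀ s ∈ Set.Icc (0:ℝ) 1, ∀ x,
      |H t x - H s x| ≤ L * |t - s|)
    (hnorm : ∀ t ∈ Set.Icc (0:ℝ) 1, ∫ x, H t x ∂μ = 0)
    (ζ : ℝ → ℝ)
    (hmaps : Set.MapsTo ζ (Set.Icc 0 1) (Set.Icc 0 1))
    (ε : ℝ)
    (hζid : ∀ t ∈ Set.Icc (0:ℝ) 1, |ζ t - t| < ε)
    (hder : ∀ t ∈ Set.Icc (0:ℝ) 1, deriv ζ t ∈ Set.Icc (0:ℝ) 2) :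
    (∀ t ∈ Set.Icc (0:ℝ) 1,
      (⨆ x, (deriv ζ t * H (ζ t) x - H t x))
        ≤ 2 * L * ε + ((⨆ x, H t x) - ⨅ x, H t x)) ∧
    (⨆ t : Set.Icc (0:ℝ) 1,
      ((⨆ x, (deriv ζ (t:ℝ) * H (ζ t) x - H t x))
        - ⨅ x, (deriv ζ (t:ℝ) * H (ζ t) x - H t x)))
      ≤ 4 * L * ε + 2 * ⨆ t : Set.Icc (0:ℝ) 1, ((⨆ x, H t x) - ⨅ x, H t x) := by
  have hL : 0 ≤ L := by
    simpa using (abs_nonneg _).trans (hLip 0 (by norm_num) 1 (by norm_num) Classical.ofNonempty)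
  have key : ∀ t ∈ Icc (0:ℝ) 1, ∀ x,
      |deriv ζ t * H (ζ t) x - H t x| ≤ 2 * L * ε + osc (H t) := by
    intro t ht x
    have hshift : |H (ζ t) x - H t x| ≤ L * ε :=
      (hLip _ (hmaps ht) t ht x).trans (by gcongr; exact (hζid t ht).le)
    have hsmall : |H t x| ≤ osc (H t) :=
      abs_le_osc_of_integral_eq_zero hμ (hH.comp (Continuous.prodMk_right t)) (hnorm t ht) x
    linarith [abs_mul_sub_le (hder t ht) (H (ζ t) x) (H t x)]
  refine ⟨fun t ht => ciSup_le fun x => (le_abs_self _).trans (key t ht x), ?_⟩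
  have : Nonempty (Icc (0:ℝ) 1) := ⟨⟨0, by norm_num⟩⟩
  refine ciSup_le fun t => ?_
  calc _ ≤ 2 * (2 * L * ε + osc (H t)) := osc_le_two_mul_of_abs_le (key t t.2)
    _ ≤ 2 * (2 * L * ε + ⨆ s : Icc (0:ℝ) 1, osc (H s)) := by
        gcongr; exact le_ciSup (bddAbove_range_osc hH isCompact_Icc) t
    _ = _ := by unfold osc; ring

/-- Let `H` be Lipschitz in `t` uniformly in `x` with constant `L`, normalized, and
let `ζ : [0,1] → [0,1]` be `C¹` with `‖ζ − id‖_{C⁰} < ε` and `0 ≤ ζ' ≤ 2`. Then the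
reparameterization `H^ζ(t,x) = ζ'(t)H(ζ(t),x)` satisfies, for every `t`,
`max_x (H^ζ(t,x) − H(t,x)) ≤ 2Lε + osc(H_t)`, and hence
`‖H^ζ − H‖_∞ ≤ 4Lε + 2‖H‖_∞`. -/
theorem reparam_linfty_estimate
    {M : Type*} [MetricSpace M] [CompactSpace M] [Nonempty M]
    [MeasurableSpace M] [BorelSpace M]
    (μ : Measure M) [IsFiniteMeasure μ] (hμ : μ ≠ 0)
    (H : ℝ → M → ℝ) (hH : Continuous (Function.uncurry H))
    (L : ℝ)
    (hLip : ∀ t ∈ Set.Icc (0:ℝ) 1, ∀ s ∈ Set.Icc (0:ℝ) 1, ∀ x,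
      |H t x - H s x| ≤ L * |t - s|)
    (hnorm : ∀ t ∈ Set.Icc (0:ℝ) 1, ∫ x, H t x ∂μ = 0)
    (ζ : ℝ → ℝ) (hζ : ContDiff ℝ 1 ζ)
    (hmaps : Set.MapsTo ζ (Set.Icc 0 1) (Set.Icc 0 1))
    (ε : ℝ) (hεpos : 0 < ε)
    (hζid : ∀ t ∈ Set.Icc (0:ℝ) 1, |ζ t - t| < ε)
    (hder : ∀ t ∈ Set.Icc (0:ℝ) 1, deriv ζ t ∈ Set.Icc (0:ℝ) 2) :
    (∀ t ∈ Set.Icc (0:ℝ) 1,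
      (⨆ x, (deriv ζ t * H (ζ t) x - H t x))
        ≤ 2 * L * ε + ((⨆ x, H t x) - ⨅ x, H t x)) ∧
    (⨆ t : Set.Icc (0:ℝ) 1,
      ((⨆ x, (deriv ζ (t:ℝ) * H (ζ t) x - H t x))
        - ⨅ x, (deriv ζ (t:ℝ) * H (ζ t) x - H t x)))
      ≤ 4 * L * ε + 2 * ⨆ t : Set.Icc (0:ℝ) 1, ((⨆ x, H t x) - ⨅ x, H t x) :=
  reparam_linfty_estimate_general μ hμ H hH L hLip hnorm ζ hmaps ε hζid hder
end
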